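/- arXiv:2509.15929 — 5 statements merged into one kernel-verified Lean document; each statement's English description precedes it below -/
import Mathlib

section
/- For the distribution on [0,b] with CDF P(x) = 1 - (1 - x/b)^a where a ≥ 1 and 0 < b ≤ 1, the expectation of the maximum of n i.i.d. samples equals b(1 - F(a,n)), where F(a,n) = Γ(1/a + 1) · Γ(n+1) / Γ(1/a + n + 1). -/
open MeasureTheory Real

private lemma cont_rpow {p : ℝ} (hp : 0 ≤ p) : Continuous (fun u : ℝ => u ^ p) :=
  continuous_iff_continuousAt.2 fun x => Real.continuousAt_rpow_const x p (Or.inr hp)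

private lemma contJ (a : ℝ) (ha : 1 ≤ a) (n : ℕ) :
    Continuous (fun u : ℝ => (1 - u ^ a) ^ n) :=
  (continuous_const.sub (cont_rpow (by linarith))).pow n

private lemma hdP (a : ℝ) (ha : 1 ≤ a) (n : ℕ) (u : ℝ) :
    HasDerivAt (fun u : ℝ => (1 - u ^ a) ^ n)
      ((n : ℝ) * (1 - u ^ a) ^ (n - 1) * (-(a * u ^ (a - 1)))) u := by
  have h1 : HasDerivAt (fun u : ℝ => 1 - u ^ a) (-(a * u ^ (a - 1))) u :=
    (Real.hasDerivAt_rpow_const (Or.inr ha)).const_sub 1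
  exact h1.pow n

private lemma Jrec (a : ℝ) (ha : 1 ≤ a) (n : ℕ) :
    (1 + ((n : ℝ) + 1) * a) * (∫ u in (0:ℝ)..1, (1 - u ^ a) ^ (n + 1))
      = ((n : ℝ) + 1) * a * (∫ u in (0:ℝ)..1, (1 - u ^ a) ^ n) := by
  have ha0 : (0:ℝ) < a := by linarith
  have hint1 : IntervalIntegrable (fun u : ℝ => (1 - u ^ a) ^ (n+1)) volume 0 1 :=
    (contJ a ha (n+1)).intervalIntegrable 0 1
  have hint2 : IntervalIntegrable (fun u : ℝ => (1 - u ^ a) ^ n) volume 0 1 :=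
    (contJ a ha n).intervalIntegrable 0 1
  have key : ∫ u in (0:ℝ)..1,
      ((1 + ((n:ℝ)+1)*a) * (1 - u^a)^(n+1) - ((n:ℝ)+1)*a * (1 - u^a)^n) = 0 := by
    have hd : ∀ u ∈ Set.uIcc (0:ℝ) 1,
        HasDerivAt (fun u : ℝ => u * (1 - u^a)^(n+1))
          ((1 + ((n:ℝ)+1)*a) * (1 - u^a)^(n+1) - ((n:ℝ)+1)*a * (1 - u^a)^n) u := by
      intro u hu
      rw [Set.uIcc_of_le (by norm_num : (0:ℝ) ≤ 1)] at hu
      have h : HasDerivAt (fun u : ℝ => u * (1 - u^a)^(n+1)) _ u := (hasDerivAt_id u).mul (hdP a ha (n+1) u)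
      convert h using 1
      rcases eq_or_lt_of_le hu.1 with h0 | h0
      · subst h0
        simp only [id_eq, Nat.add_sub_cancel, mul_zero, zero_mul,
          Real.zero_rpow (show a ≠ 0 by linarith)]
        push_cast
        ring
      · have huu : u * u ^ (a - 1) = u ^ a := by
          nth_rewrite 1 [← Real.rpow_one u]
          rw [← Real.rpow_add h0]; ring_nf
        simp only [id_eq, Nat.add_sub_cancel]
        rw [show u * ((↑(n+1) : ℝ) * (1 - u ^ a) ^ n * (-(a * u ^ (a - 1))))
            = -((↑(n+1) : ℝ) * (1 - u ^ a) ^ n * a * (u * u ^ (a - 1))) by ring, huu]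
        have hv : u ^ a = 1 - (1 - u ^ a) := by ring
        rw [hv]
        push_cast
        ring
    rw [intervalIntegral.integral_eq_sub_of_hasDerivAt hd
      (((continuous_const.mul (contJ a ha (n+1))).sub
        (continuous_const.mul (contJ a ha n))).intervalIntegrable 0 1)]
    rw [Real.one_rpow]
    simp
  rw [intervalIntegral.integral_sub (hint1.const_mul _) (hint2.const_mul _),
    intervalIntegral.integral_const_mul, intervalIntegral.integral_const_mul] at key
  linarith

private lemma Jval (a : ℝ) (ha : 1 ≤ a) (n : ℕ) :
    (∫ u in (0:ℝ)..1, (1 - u ^ a) ^ n)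
      = Real.Gamma (1/a + 1) * Real.Gamma ((n:ℝ) + 1) / Real.Gamma (1/a + (n:ℝ) + 1) := by
  have ha0 : (0:ℝ) < a := by linarith
  have hia : (0:ℝ) < 1/a := by positivity
  induction n with
  | zero =>
    have hΓ : Real.Gamma (1/a + 1) ≠ 0 := (Real.Gamma_pos_of_pos (by linarith)).ne'
    simp [Real.Gamma_one]
    field_simp
  | succ n ih =>
    have hrec := Jrec a ha n
    have hpos : (0:ℝ) < 1 + ((n:ℝ)+1)*a := by positivity
    have hΓn1 : Real.Gamma (1/a + (n:ℝ) + 1) ≠ 0 :=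
      (Real.Gamma_pos_of_pos (by positivity)).ne'
    have hΓn2 : Real.Gamma (1/a + ((n:ℝ)+1) + 1) = (1/a + (n:ℝ) + 1) * Real.Gamma (1/a + (n:ℝ) + 1) := by
      rw [show 1/a + ((n:ℝ)+1) + 1 = (1/a + (n:ℝ) + 1) + 1 by ring,
        Real.Gamma_add_one (by positivity)]
    have hΓm : Real.Gamma (((n:ℝ)+1) + 1) = ((n:ℝ)+1) * Real.Gamma ((n:ℝ)+1) := by
      rw [Real.Gamma_add_one (by positivity)]
    have hJ : (∫ u in (0:ℝ)..1, (1 - u ^ a) ^ (n+1))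
        = ((n:ℝ)+1) * a * (∫ u in (0:ℝ)..1, (1 - u ^ a) ^ n) / (1 + ((n:ℝ)+1)*a) := by
      field_simp
      linarith
    rw [hJ, ih]
    push_cast
    rw [hΓm, hΓn2]
    field_simp
    ring

private lemma Kval (a : ℝ) (ha : 1 ≤ a) (n : ℕ) (hn : 1 ≤ n) :
    (∫ u in (0:ℝ)..1, (1-u) * ((n:ℝ) * a * u^(a-1) * (1-u^a)^(n-1)))
      = 1 - (∫ u in (0:ℝ)..1, (1-u^a)^n) := by
  have ha0 : (0:ℝ) < a := by linarith
  have contK : Continuous (fun u : ℝ => (1-u) * ((n:ℝ) * a * u^(a-1) * (1-u^a)^(n-1))) := by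
    exact (continuous_const.sub continuous_id).mul
      (((continuous_const.mul (cont_rpow (by linarith : (0:ℝ) ≤ a - 1))).mul
        ((continuous_const.sub (cont_rpow (by linarith))).pow (n-1))))
  have key : ∫ u in (0:ℝ)..1,
      (-((1-u^a)^n) - (1-u) * ((n:ℝ) * a * u^(a-1) * (1-u^a)^(n-1))) = -1 := by
    have hd : ∀ u ∈ Set.uIcc (0:ℝ) 1,
        HasDerivAt (fun u : ℝ => (1-u) * (1-u^a)^n)
          (-((1-u^a)^n) - (1-u) * ((n:ℝ) * a * u^(a-1) * (1-u^a)^(n-1))) u := by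
      intro u _
      have h : HasDerivAt (fun u : ℝ => (1-u) * (1-u^a)^n) _ u := ((hasDerivAt_id u).const_sub 1).mul (hdP a ha n u)
      convert h using 1
      simp only [id_eq]
      ring
    rw [intervalIntegral.integral_eq_sub_of_hasDerivAt hd
      (((contJ a ha n).neg.sub contK).intervalIntegrable 0 1)]
    rw [Real.one_rpow, Real.zero_rpow ha0.ne']
    norm_num
  rw [intervalIntegral.integral_sub (f := fun u => -(1-u^a)^n) ((contJ a ha n).neg.intervalIntegrable 0 1)
      (contK.intervalIntegrable 0 1), intervalIntegral.integral_neg] at key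
  linarith

/-- For the distribution on `[0,b]` with CDF `P x = 1 - (1 - x/b)^a` (`a ≥ 1`, `0 < b ≤ 1`),
the expectation of the maximum of `n` i.i.d. samples, computed as
`∫₀^b x d(P(x)^n) = ∫₀^b x · n ρ(x) P(x)^(n-1) dx` with density `ρ x = (a/b)(1-x/b)^(a-1)`,
equals `b (1 - F(a,n))` where `F(a,n) = Γ(1/a+1) Γ(n+1) / Γ(1/a+n+1)`. -/
theorem stmt0 (a b : ℝ) (ha : 1 ≤ a) (hb0 : 0 < b) (hb1 : b ≤ 1)
    (n : ℕ) (hn : 1 ≤ n) :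
    (∫ x in (0:ℝ)..b,
        x * ((n : ℝ) * ((a / b) * (1 - x / b) ^ (a - 1)) *
          (1 - (1 - x / b) ^ a) ^ (n - 1)))
      = b * (1 - Real.Gamma (1 / a + 1) * Real.Gamma ((n : ℝ) + 1)
              / Real.Gamma (1 / a + (n : ℝ) + 1)) := by
  set f : ℝ → ℝ := fun x =>
    x * ((n : ℝ) * ((a / b) * (1 - x / b) ^ (a - 1)) *
      (1 - (1 - x / b) ^ a) ^ (n - 1)) with hf
  have hsub := intervalIntegral.integral_comp_mul_add f (neg_ne_zero.mpr hb0.ne') b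
    (a := 0) (b := 1)
  have hb : (-b) * 0 + b = b := by ring
  have hb' : (-b) * 1 + b = 0 := by ring
  rw [hb, hb', intervalIntegral.integral_symm 0 b, smul_eq_mul] at hsub
  have hptwise : ∀ u : ℝ, f (-b * u + b) = (1-u) * ((n:ℝ) * a * u^(a-1) * (1-u^a)^(n-1)) := by
    intro u
    have h1 : 1 - (-b * u + b)/b = u := by field_simp; ring
    rw [hf]
    simp only [h1]
    have h2 : -b * u + b = b * (1 - u) := by ring
    rw [h2]
    field_simp
  have heq : (∫ u in (0:ℝ)..1, f (-b * u + b))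
      = ∫ u in (0:ℝ)..1, (1-u) * ((n:ℝ) * a * u^(a-1) * (1-u^a)^(n-1)) :=
    intervalIntegral.integral_congr (fun u _ => hptwise u)
  rw [heq, Kval a ha n hn, Jval a ha n] at hsub
  have h2 : (-b)⁻¹ * -(∫ x in (0:ℝ)..b, f x) = (∫ x in (0:ℝ)..b, f x) / b := by
    field_simp
  rw [h2, eq_div_iff hb0.ne'] at hsub
  linarith [hsub]
end

section
/- For a ≥ 1 and positive integers n₁ ≤ n, with F(a,n) = Γ(1/a + 1) · Γ(n+1) / Γ(1/a + n + 1), one has F(a, n₁) - F(a, n) ≤ Γ(1/a + 1) · (n - n₁ + 1) / ((n₁ + 1/a) · (n + 1/a)^{1/a}). -/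
open Real Set

/-- Gautschi upper bound: `Γ(x+1)/Γ(x+s+1) ≤ (x+s)^{-s}`. -/
lemma gautschi_upper {x s : ℝ} (hx : 0 < x) (hs0 : 0 < s) (hs1 : s ≤ 1) :
    Real.Gamma (x + 1) / Real.Gamma (x + s + 1) ≤ (x + s) ^ (-s) := by
  have hxs : (0:ℝ) < x + s := by linarith
  have hxs1 : (0:ℝ) < x + s + 1 := by linarith
  have hG1 : 0 < Real.Gamma (x + s + 1) := Real.Gamma_pos_of_pos hxs1
  have hG2 : 0 < Real.Gamma (x + s) := Real.Gamma_pos_of_pos hxs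
  have hG3 : 0 < Real.Gamma (x + 1) := Real.Gamma_pos_of_pos (by linarith)
  have hconv := Real.convexOn_log_Gamma.2 (mem_Ioi.2 hxs) (mem_Ioi.2 hxs1)
      hs0.le (by linarith : (0:ℝ) ≤ 1 - s) (by ring)
  have hpt : s • (x + s) + (1 - s) • (x + s + 1) = x + 1 := by
    simp [smul_eq_mul]; ring
  rw [hpt] at hconv
  simp only [Function.comp_apply, smul_eq_mul] at hconv
  have hrec : Real.Gamma (x + s + 1) = (x + s) * Real.Gamma (x + s) := by
    rw [Real.Gamma_add_one (ne_of_gt hxs)]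
  have hlog : Real.log (Real.Gamma (x + s)) =
      Real.log (Real.Gamma (x + s + 1)) - Real.log (x + s) := by
    rw [hrec, Real.log_mul (ne_of_gt hxs) (ne_of_gt hG2)]; ring
  rw [hlog] at hconv
  -- hconv : log Γ(x+1) ≤ s * (log Γ(x+s+1) - log (x+s)) + (1-s) * log Γ(x+s+1)
  have key : Real.log (Real.Gamma (x + 1)) ≤
      Real.log (Real.Gamma (x + s + 1)) - s * Real.log (x + s) := by linarith
  rw [div_le_iff₀ hG1, Real.rpow_def_of_pos hxs]
  calc Real.Gamma (x + 1) = Real.exp (Real.log (Real.Gamma (x + 1))) :=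
        (Real.exp_log hG3).symm
    _ ≤ Real.exp (Real.log (Real.Gamma (x + s + 1)) - s * Real.log (x + s)) :=
        Real.exp_le_exp.2 key
    _ = Real.exp (Real.log (x + s) * (-s)) * Real.Gamma (x + s + 1) := by
        rw [Real.exp_sub, Real.exp_log hG1, div_eq_mul_inv, ← Real.exp_neg, mul_comm]
        congr 1; ring

/-- Gautschi lower bound: `(x+s+1)^{-s} ≤ Γ(x+1)/Γ(x+s+1)`. -/
lemma gautschi_lower {x s : ℝ} (hx : 0 < x) (hs0 : 0 < s) (hs1 : s ≤ 1) :
    (x + s + 1) ^ (-s) ≤ Real.Gamma (x + 1) / Real.Gamma (x + s + 1) := by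
  have hx1 : (0:ℝ) < x + 1 := by linarith
  have hxs1 : (0:ℝ) < x + s + 1 := by linarith
  have hG1 : 0 < Real.Gamma (x + s + 1) := Real.Gamma_pos_of_pos hxs1
  have hG3 : 0 < Real.Gamma (x + 1) := Real.Gamma_pos_of_pos hx1
  have hG4 : 0 < Real.Gamma (x + 2) := Real.Gamma_pos_of_pos (by linarith)
  have hconv := Real.convexOn_log_Gamma.2 (mem_Ioi.2 hx1) (mem_Ioi.2 (by linarith : (0:ℝ) < x + 2))
      (by linarith : (0:ℝ) ≤ 1 - s) hs0.le (by ring)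
  have hpt : (1 - s) • (x + 1) + s • (x + 2) = x + s + 1 := by
    simp [smul_eq_mul]; ring
  rw [hpt] at hconv
  simp only [Function.comp_apply, smul_eq_mul] at hconv
  have hrec : Real.Gamma (x + 2) = (x + 1) * Real.Gamma (x + 1) := by
    have : (x:ℝ) + 2 = (x + 1) + 1 := by ring
    rw [this, Real.Gamma_add_one (ne_of_gt hx1)]
  have hlog : Real.log (Real.Gamma (x + 2)) =
      Real.log (x + 1) + Real.log (Real.Gamma (x + 1)) := by
    rw [hrec, Real.log_mul (ne_of_gt hx1) (ne_of_gt hG3)]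
  rw [hlog] at hconv
  have key : Real.log (Real.Gamma (x + s + 1)) ≤
      Real.log (Real.Gamma (x + 1)) + s * Real.log (x + 1) := by linarith
  have step1 : (x + 1) ^ (-s) ≤ Real.Gamma (x + 1) / Real.Gamma (x + s + 1) := by
    rw [le_div_iff₀ hG1, Real.rpow_def_of_pos hx1]
    calc Real.exp (Real.log (x + 1) * (-s)) * Real.Gamma (x + s + 1)
        = Real.exp (Real.log (x + 1) * (-s) + Real.log (Real.Gamma (x + s + 1))) := by
          rw [Real.exp_add, Real.exp_log hG1]
      _ ≤ Real.exp (Real.log (Real.Gamma (x + 1))) := by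
          apply Real.exp_le_exp.2; linarith
      _ = Real.Gamma (x + 1) := Real.exp_log hG3
  refine le_trans ?_ step1
  apply Real.rpow_le_rpow_of_nonpos hx1 (by linarith) (by linarith)

/-- Key elementary inequality. -/
lemma key_ineq {s A B : ℝ} (hs0 : 0 < s) (hs1 : s ≤ 1) (hA : 1 ≤ A) (hAB : A ≤ B) :
    A ^ (-s) - (B + 1) ^ (-s) ≤ (B - A + 1) / (A * B ^ s) := by
  have hA0 : (0:ℝ) < A := by linarith
  have hB0 : (0:ℝ) < B := by linarith
  have hB1 : (0:ℝ) < B + 1 := by linarith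
  have hBs : (0:ℝ) < B ^ s := Real.rpow_pos_of_pos hB0 s
  rw [le_div_iff₀ (by positivity : (0:ℝ) < A * B ^ s)]
  -- (A^{-s} - (B+1)^{-s}) * (A * B^s) ≤ B - A + 1
  have e1 : A ^ (-s) * A = A ^ (1 - s) := by
    nth_rw 2 [show A = A ^ (1:ℝ) by rw [Real.rpow_one]]
    rw [← Real.rpow_add hA0]; ring_nf
  have hAM : A ^ (1 - s) * B ^ s ≤ (1 - s) * A + s * B :=
    Real.geom_mean_le_arith_mean2_weighted (by linarith) hs0.le hA0.le hB0.le (by ring)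
  have e2 : (B + 1) ^ (-s) * (A * B ^ s) = A * (B / (B + 1)) ^ s := by
    rw [Real.div_rpow hB0.le hB1.le, Real.rpow_neg hB1.le]
    field_simp
  have hBern : B / (B + 1) ≤ (B / (B + 1)) ^ s := by
    have h1 : B / (B + 1) ≤ 1 := by rw [div_le_one hB1]; linarith
    have h0 : 0 < B / (B + 1) := by positivity
    calc B / (B + 1) = (B / (B + 1)) ^ (1:ℝ) := (Real.rpow_one _).symm
      _ ≤ (B / (B + 1)) ^ s := Real.rpow_le_rpow_of_exponent_ge h0 h1 hs1
  have hAB2 : A * (B / (B + 1)) ≤ A * (B / (B + 1)) ^ s :=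
    mul_le_mul_of_nonneg_left hBern hA0.le
  have calc1 : (A ^ (-s) - (B + 1) ^ (-s)) * (A * B ^ s)
      = A ^ (1 - s) * B ^ s - (B + 1) ^ (-s) * (A * B ^ s) := by
    rw [← e1]; ring
  rw [calc1, e2]
  have final : (1 - s) * A + s * B - A * (B / (B + 1)) ≤ B - A + 1 := by
    have h2 : A * (B / (B + 1)) = A - A / (B + 1) := by field_simp; ring
    have h3 : A / (B + 1) ≤ 1 := by rw [div_le_one hB1]; linarith
    rw [h2]
    nlinarith [mul_nonneg (sub_nonneg.2 hs1) (sub_nonneg.2 hAB)]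
  linarith [hAM, hAB2, final]

/-- For `a ≥ 1` and positive integers `n₁ ≤ n`,
`F(a,n₁) - F(a,n) ≤ Γ(1/a+1) (n - n₁ + 1) / ((n₁ + 1/a) (n + 1/a)^{1/a})`
where `F(a,n) = Γ(1/a+1) Γ(n+1) / Γ(1/a+n+1)`. -/
theorem stmt2 (a : ℝ) (ha : 1 ≤ a) (n₁ n : ℕ) (hn₁ : 1 ≤ n₁) (h : n₁ ≤ n) :
    Real.Gamma (1 / a + 1) * Real.Gamma ((n₁ : ℝ) + 1) / Real.Gamma (1 / a + (n₁ : ℝ) + 1)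
      - Real.Gamma (1 / a + 1) * Real.Gamma ((n : ℝ) + 1) / Real.Gamma (1 / a + (n : ℝ) + 1)
      ≤ Real.Gamma (1 / a + 1) * ((n : ℝ) - (n₁ : ℝ) + 1)
          / (((n₁ : ℝ) + 1 / a) * ((n : ℝ) + 1 / a) ^ (1 / a)) := by
  set s : ℝ := 1 / a with hs
  have ha0 : (0:ℝ) < a := by linarith
  have hs0 : 0 < s := by positivity
  have hs1 : s ≤ 1 := by rw [hs]; rw [div_le_one ha0]; linarith
  have hn₁R : (1:ℝ) ≤ (n₁ : ℝ) := by exact_mod_cast hn₁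
  have hnR : (n₁ : ℝ) ≤ (n : ℝ) := by exact_mod_cast h
  have hn₁0 : (0:ℝ) < (n₁:ℝ) := by linarith
  have hn0 : (0:ℝ) < (n:ℝ) := by linarith
  have hGs : 0 < Real.Gamma (s + 1) := Real.Gamma_pos_of_pos (by linarith)
  have hG1 : 0 < Real.Gamma ((n₁:ℝ) + s + 1) := Real.Gamma_pos_of_pos (by linarith)
  have hG2 : 0 < Real.Gamma ((n:ℝ) + s + 1) := Real.Gamma_pos_of_pos (by linarith)
  have hup : Real.Gamma ((n₁:ℝ) + 1) / Real.Gamma ((n₁:ℝ) + s + 1) ≤ ((n₁:ℝ) + s) ^ (-s) :=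
    gautschi_upper hn₁0 hs0 hs1
  have hlo : ((n:ℝ) + s + 1) ^ (-s) ≤ Real.Gamma ((n:ℝ) + 1) / Real.Gamma ((n:ℝ) + s + 1) :=
    gautschi_lower hn0 hs0 hs1
  have hkey := key_ineq (A := (n₁:ℝ) + s) (B := (n:ℝ) + s) hs0 hs1 (by linarith) (by linarith)
  have harg1 : (1 / a + (n₁ : ℝ) + 1) = ((n₁:ℝ) + s + 1) := by rw [hs]; ring
  have harg2 : (1 / a + (n : ℝ) + 1) = ((n:ℝ) + s + 1) := by rw [hs]; ring
  have harg3 : (1 / a + 1) = s + 1 := by rw [hs]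
  rw [harg1, harg2, harg3]
  have lhs_eq : Real.Gamma (s + 1) * Real.Gamma ((n₁:ℝ) + 1) / Real.Gamma ((n₁:ℝ) + s + 1)
      - Real.Gamma (s + 1) * Real.Gamma ((n:ℝ) + 1) / Real.Gamma ((n:ℝ) + s + 1)
      = Real.Gamma (s + 1) * (Real.Gamma ((n₁:ℝ) + 1) / Real.Gamma ((n₁:ℝ) + s + 1)
        - Real.Gamma ((n:ℝ) + 1) / Real.Gamma ((n:ℝ) + s + 1)) := by ring
  rw [lhs_eq]
  have step : Real.Gamma ((n₁:ℝ) + 1) / Real.Gamma ((n₁:ℝ) + s + 1)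
      - Real.Gamma ((n:ℝ) + 1) / Real.Gamma ((n:ℝ) + s + 1)
      ≤ ((n:ℝ) + s - ((n₁:ℝ) + s) + 1) / (((n₁:ℝ) + s) * ((n:ℝ) + s) ^ s) := by
    calc Real.Gamma ((n₁:ℝ) + 1) / Real.Gamma ((n₁:ℝ) + s + 1)
        - Real.Gamma ((n:ℝ) + 1) / Real.Gamma ((n:ℝ) + s + 1)
        ≤ ((n₁:ℝ) + s) ^ (-s) - ((n:ℝ) + s + 1) ^ (-s) := by linarith
      _ ≤ ((n:ℝ) + s - ((n₁:ℝ) + s) + 1) / (((n₁:ℝ) + s) * ((n:ℝ) + s) ^ s) := hkey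
  calc Real.Gamma (s + 1) * (Real.Gamma ((n₁:ℝ) + 1) / Real.Gamma ((n₁:ℝ) + s + 1)
        - Real.Gamma ((n:ℝ) + 1) / Real.Gamma ((n:ℝ) + s + 1))
      ≤ Real.Gamma (s + 1) * (((n:ℝ) + s - ((n₁:ℝ) + s) + 1)
          / (((n₁:ℝ) + s) * ((n:ℝ) + s) ^ s)) := mul_le_mul_of_nonneg_left step hGs.le
    _ = Real.Gamma (s + 1) * ((n : ℝ) - (n₁ : ℝ) + 1)
          / (((n₁ : ℝ) + 1 / a) * ((n : ℝ) + 1 / a) ^ (1 / a)) := by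
        rw [← hs]; ring_nf
end

section
/- Consider K arms where arm k yields i.i.d. rewards with CDF P(x; a_k, b_k) = 1 - (1 - x/b_k)^{a_k} on [0, b_k], with a_k ≥ 1, b_k ≤ 1, and arm 1 optimal (b_1 > b_k for all k ≥ 2). Then the performance gap G(T) = b_1 - max_k E[max_{t ≤ T} X_{k,t}] satisfies G(T) ≤ b_1 / (T + 1/a_1)^{1/a_1}. -/
open Real

lemma gamma_le_one {c : ℝ} (hc0 : 0 ≤ c) (hc1 : c ≤ 1) : Real.Gamma (c + 1) ≤ 1 := by
  have h := Real.convexOn_Gamma.2 (Set.mem_Ioi.2 one_pos) (Set.mem_Ioi.2 two_pos)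
    (by linarith : (0:ℝ) ≤ 1 - c) hc0 (by ring)
  simp only [smul_eq_mul] at h
  have e : (1 - c) * 1 + c * 2 = c + 1 := by ring
  rw [e] at h
  rw [Real.Gamma_one, Real.Gamma_two] at h
  linarith

lemma gamma_ratio {c : ℝ} (hc0 : 0 < c) (hc1 : c ≤ 1) (T : ℕ) (hT : 1 ≤ T) :
    Real.Gamma ((T:ℝ) + 1) ≤ Real.Gamma (c + (T:ℝ) + 1) * ((T:ℝ) + c) ^ (-c) := by
  have hT1 : (1:ℝ) ≤ (T:ℝ) := by exact_mod_cast hT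
  have hx : (0:ℝ) < (T:ℝ) + c := by linarith
  have hy : (0:ℝ) < (T:ℝ) + c + 1 := by linarith
  have h := Real.convexOn_log_Gamma.2 (Set.mem_Ioi.2 hx) (Set.mem_Ioi.2 hy)
    (le_of_lt hc0) (by linarith : (0:ℝ) ≤ 1 - c) (by ring)
  simp only [smul_eq_mul, Function.comp] at h
  have e : c * ((T:ℝ) + c) + (1 - c) * ((T:ℝ) + c + 1) = (T:ℝ) + 1 := by ring
  rw [e] at h
  have hg1 : 0 < Real.Gamma ((T:ℝ) + c) := Real.Gamma_pos_of_pos hx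
  have hg2 : 0 < Real.Gamma ((T:ℝ) + c + 1) := Real.Gamma_pos_of_pos hy
  have hg3 : 0 < Real.Gamma ((T:ℝ) + 1) := Real.Gamma_pos_of_pos (by linarith)
  have key : Real.Gamma ((T:ℝ) + 1) ≤
      Real.Gamma ((T:ℝ) + c) ^ c * Real.Gamma ((T:ℝ) + c + 1) ^ (1 - c) := by
    have := Real.exp_le_exp.2 h
    rw [Real.exp_log hg3, Real.exp_add] at this
    rw [Real.rpow_def_of_pos hg1, Real.rpow_def_of_pos hg2]
    calc Real.Gamma ((T:ℝ)+1) ≤ _ := this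
    _ = _ := by ring_nf
  have hadd : Real.Gamma ((T:ℝ) + c + 1) = ((T:ℝ) + c) * Real.Gamma ((T:ℝ) + c) :=
    Real.Gamma_add_one (ne_of_gt hx)
  have hGeq : Real.Gamma ((T:ℝ) + c) = Real.Gamma ((T:ℝ) + c + 1) / ((T:ℝ) + c) := by
    field_simp [hadd]
    exact hadd.symm
  rw [hGeq] at key
  have expand : (Real.Gamma ((T:ℝ) + c + 1) / ((T:ℝ) + c)) ^ c
      * Real.Gamma ((T:ℝ) + c + 1) ^ (1 - c)
      = Real.Gamma ((T:ℝ) + c + 1) * ((T:ℝ) + c) ^ (-c) := by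
    rw [Real.div_rpow (le_of_lt hg2) (le_of_lt hx), div_eq_mul_inv,
      ← Real.rpow_neg (le_of_lt hx)]
    rw [mul_assoc, mul_comm (((T:ℝ)+c) ^ (-c)), ← mul_assoc,
      ← Real.rpow_add hg2]
    ring_nf
    rw [Real.rpow_one]
    ring
  rw [expand] at key
  have e2 : c + (T:ℝ) + 1 = (T:ℝ) + c + 1 := by ring
  rw [e2]
  exact key

/-- Performance-gap bound for `K` arms with beta-like rewards, arm `0` optimal:
`G(T) = b₀ - max_k E[max_{t ≤ T} X_{k,t}] ≤ b₀ / (T + 1/a₀)^{1/a₀}`,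
where `E[max_{t ≤ T} X_{k,t}] = b_k (1 - Γ(1/a_k+1) Γ(T+1)/Γ(1/a_k+T+1))`. -/
theorem stmt4 (K : ℕ) [NeZero K] (T : ℕ) (hT : 1 ≤ T)
    (a b : Fin K → ℝ) (ha : ∀ k, 1 ≤ a k) (hb1 : ∀ k, b k ≤ 1)
    (hbpos : ∀ k, 0 < b k) (hopt : ∀ k : Fin K, k ≠ 0 → b k < b 0) :
    b 0 - Finset.univ.sup' Finset.univ_nonempty
        (fun k => b k * (1 - Real.Gamma (1 / a k + 1) * Real.Gamma ((T : ℝ) + 1)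
            / Real.Gamma (1 / a k + (T : ℝ) + 1)))
      ≤ b 0 / ((T : ℝ) + 1 / a 0) ^ (1 / a 0) := by
  set c := 1 / a 0 with hc
  have ha0 : (1:ℝ) ≤ a 0 := ha 0
  have hc0 : 0 < c := by positivity
  have hc1 : c ≤ 1 := by rw [hc, div_le_one (by linarith)]; exact ha0
  have hT1 : (1:ℝ) ≤ (T:ℝ) := by exact_mod_cast hT
  have hx : (0:ℝ) < (T:ℝ) + c := by linarith
  have hg2 : 0 < Real.Gamma (c + (T:ℝ) + 1) :=
    Real.Gamma_pos_of_pos (by linarith)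
  have hsup : b 0 * (1 - Real.Gamma (c + 1) * Real.Gamma ((T:ℝ) + 1)
      / Real.Gamma (c + (T:ℝ) + 1)) ≤ Finset.univ.sup' Finset.univ_nonempty
        (fun k => b k * (1 - Real.Gamma (1 / a k + 1) * Real.Gamma ((T : ℝ) + 1)
            / Real.Gamma (1 / a k + (T : ℝ) + 1))) :=
    Finset.le_sup' (fun k => b k * (1 - Real.Gamma (1 / a k + 1) * Real.Gamma ((T : ℝ) + 1)
            / Real.Gamma (1 / a k + (T : ℝ) + 1))) (Finset.mem_univ (0 : Fin K))
  have hratio : Real.Gamma (c + 1) * Real.Gamma ((T:ℝ) + 1)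
      / Real.Gamma (c + (T:ℝ) + 1) ≤ ((T:ℝ) + c) ^ (-c) := by
    rw [div_le_iff₀ hg2]
    calc Real.Gamma (c + 1) * Real.Gamma ((T:ℝ) + 1)
        ≤ 1 * (Real.Gamma (c + (T:ℝ) + 1) * ((T:ℝ) + c) ^ (-c)) := by
          apply mul_le_mul (gamma_le_one (le_of_lt hc0) hc1)
            (gamma_ratio hc0 hc1 T hT)
            (le_of_lt (Real.Gamma_pos_of_pos (by linarith))) zero_le_one
      _ = ((T:ℝ) + c) ^ (-c) * Real.Gamma (c + (T:ℝ) + 1) := by ring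
  have hfin : b 0 * (Real.Gamma (c + 1) * Real.Gamma ((T:ℝ) + 1)
      / Real.Gamma (c + (T:ℝ) + 1)) ≤ b 0 / ((T:ℝ) + c) ^ c := by
    have hrw : b 0 / ((T:ℝ) + c) ^ c = b 0 * ((T:ℝ) + c) ^ (-c) := by
      rw [Real.rpow_neg (le_of_lt hx), div_eq_mul_inv]
    rw [hrw]
    exact mul_le_mul_of_nonneg_left hratio (le_of_lt (hbpos 0))
  have := sub_le_sub_left hsup (b 0)
  refine le_trans this ?_
  have e : b 0 - b 0 * (1 - Real.Gamma (c + 1) * Real.Gamma ((T:ℝ) + 1)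
      / Real.Gamma (c + (T:ℝ) + 1)) = b 0 * (Real.Gamma (c + 1)
      * Real.Gamma ((T:ℝ) + 1) / Real.Gamma (c + (T:ℝ) + 1)) := by ring
  rw [e]
  exact hfin
end

section
/- Let P₁ and P₂ be the distributions on [0, b₁] and [0, b₂] with densities ρ(x; a, b) = (a/b)(1 - x/b)^{a-1}, where a₁, a₂ ≥ 1 and b₂ < b₁ < 1. Then the Kullback–Leibler divergence KL(P₂ ∥ P₁) = ∫₀^{b₂} ρ(x; a₂, b₂) ln(ρ(x; a₂, b₂)/ρ(x; a₁, b₁)) dx is finite. -/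
set_option maxHeartbeats 1000000


open MeasureTheory

lemma log_intint_01 : IntervalIntegrable Real.log volume 0 1 := by
  have h1 : IntegrableOn (fun x : ℝ => -Real.log x) (Set.Ioc (0:ℝ) 1) volume := by
    apply intervalIntegral.integrableOn_deriv_of_nonneg
      (g := fun x : ℝ => x - x * Real.log x)
    · exact (continuous_id.sub Real.continuous_mul_log).continuousOn
    · intro x hx
      have h := (Real.hasDerivAt_mul_log (ne_of_gt hx.1))
      have h2 := (hasDerivAt_id x).sub h
      exact h2.congr_deriv (by ring)
    · intro x hx
      simpa using Real.log_nonpos hx.1.le hx.2.le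
  have h2 : IntervalIntegrable (fun x : ℝ => -Real.log x) volume 0 1 :=
    (intervalIntegrable_iff_integrableOn_Ioc_of_le zero_le_one).mpr h1
  have h3 : Real.log = (-fun x : ℝ => -Real.log x) := by funext x; simp
  rw [h3]
  exact h2.neg

lemma log_affine_intint {b : ℝ} (hb : 0 < b) :
    IntervalIntegrable (fun x => Real.log (1 - x / b)) volume 0 b := by
  have h3 := (log_intint_01.comp_sub_left 1).symm
  -- h3 : IntervalIntegrable (fun x => Real.log (1 - x)) volume 0 1  (up to endpoints)
  have h4 := h3.comp_mul_right (c := b⁻¹)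
  have hne : b⁻¹ ≠ 0 := inv_ne_zero hb.ne'
  simp only [sub_zero, sub_self] at h3
  have h4 := h3.comp_mul_right (c := b⁻¹)
  have : ∀ x : ℝ, x * b⁻¹ = x / b := fun x => (div_eq_mul_inv x b).symm
  simp only [this, zero_div, one_div, inv_inv] at h4
  simpa using h4

/-- For beta-like densities `ρ(x; a, b) = (a/b)(1 - x/b)^(a-1)` with
`a₁, a₂ ≥ 1` and `0 < b₂ < b₁ < 1`, the KL divergence
`KL(P₂ ∥ P₁) = ∫₀^{b₂} ρ₂ ln (ρ₂/ρ₁)` is finite, i.e. the integrand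
is integrable on `[0, b₂]`. -/
theorem stmt10 (a₁ a₂ b₁ b₂ : ℝ) (ha₁ : 1 ≤ a₁) (ha₂ : 1 ≤ a₂)
    (hb₂ : 0 < b₂) (hbb : b₂ < b₁) (hb₁ : b₁ < 1) :
    IntervalIntegrable
      (fun x => (a₂ / b₂) * (1 - x / b₂) ^ (a₂ - 1) *
        Real.log ((a₂ / b₂) * (1 - x / b₂) ^ (a₂ - 1)
          / ((a₁ / b₁) * (1 - x / b₁) ^ (a₁ - 1))))
      volume 0 b₂ := by
  have hb₁0 : 0 < b₁ := hb₂.trans hbb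
  set C₂ : ℝ := a₂ / b₂ with hC₂def
  set C₁ : ℝ := a₁ / b₁ with hC₁def
  set c₂ : ℝ := a₂ - 1 with hc₂def
  set c₁ : ℝ := a₁ - 1 with hc₁def
  have hC₂ : 0 < C₂ := div_pos (lt_of_lt_of_le one_pos ha₂) hb₂
  have hC₁ : 0 < C₁ := div_pos (lt_of_lt_of_le one_pos ha₁) hb₁0
  have hc₂0 : 0 ≤ c₂ := by simp [hc₂def]; linarith
  have hc₁0 : 0 ≤ c₁ := by simp [hc₁def]; linarith
  set u₀ : ℝ := 1 - b₂ / b₁ with hu₀def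
  have hu₀ : 0 < u₀ := by
    have : b₂ / b₁ < 1 := (div_lt_one hb₁0).mpr hbb
    simp [hu₀def]; linarith
  set f : ℝ → ℝ := fun x => C₂ * (1 - x / b₂) ^ c₂ *
      Real.log (C₂ * (1 - x / b₂) ^ c₂ / (C₁ * (1 - x / b₁) ^ c₁)) with hfdef
  set R : ℝ := |Real.log C₂| + |Real.log C₁| + c₁ * |Real.log u₀| with hRdef
  have hR : 0 ≤ R := by positivity
  set K : ℝ := max (C₂ * R) ‖f b₂‖ with hKdef
  have hK0 : 0 ≤ K := le_trans (by positivity) (le_max_left _ _)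
  set M : ℝ := C₂ * c₂ with hMdef
  have hM0 : 0 ≤ M := by positivity
  set G : ℝ → ℝ := fun x => K + M * |Real.log (1 - x / b₂)| with hGdef
  have hG : IntervalIntegrable G volume 0 b₂ :=
    (intervalIntegrable_const).add (((log_affine_intint hb₂).abs).const_mul M)
  apply hG.mono_fun'
  · -- measurability of f
    apply Measurable.aestronglyMeasurable
    have hm2 : Measurable fun x : ℝ => C₂ * (1 - x / b₂) ^ c₂ :=
      (continuous_const.mul ((continuous_const.sub (continuous_id.div_const b₂)).rpow_const
        (fun x => Or.inr hc₂0))).measurable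
    have hm1 : Measurable fun x : ℝ => C₁ * (1 - x / b₁) ^ c₁ :=
      (continuous_const.mul ((continuous_const.sub (continuous_id.div_const b₁)).rpow_const
        (fun x => Or.inr hc₁0))).measurable
    exact hm2.mul (Real.measurable_log.comp (hm2.div hm1))
  · -- the bound
    rw [Set.uIoc_of_le hb₂.le]
    refine ae_restrict_of_forall_mem measurableSet_Ioc ?_
    intro x hx
    show ‖f x‖ ≤ G x
    rcases eq_or_lt_of_le hx.2 with hxb | hxb
    · -- x = b₂
      subst hxb
      have h0 : (1 : ℝ) - x / x = 0 := by
        rw [div_self (ne_of_gt hx.1)]; ring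
      simp only [hGdef, h0, Real.log_zero, abs_zero, mul_zero, add_zero]
      exact le_max_right _ _
    · -- x ∈ Ioo 0 b₂
      set t : ℝ := 1 - x / b₂ with htdef
      set u : ℝ := 1 - x / b₁ with hudef
      have ht0 : 0 < t := by
        have : x / b₂ < 1 := (div_lt_one hb₂).mpr hxb
        simp [htdef]; linarith
      have ht1 : t ≤ 1 := by
        have : 0 < x / b₂ := div_pos hx.1 hb₂
        simp [htdef]; linarith
      have hu0 : u₀ ≤ u := by
        have : x / b₁ ≤ b₂ / b₁ := by gcongr
        simp only [hu₀def, hudef]; linarith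
      have hupos : 0 < u := lt_of_lt_of_le hu₀ hu0
      have hu1 : u ≤ 1 := by
        have : 0 < x / b₁ := div_pos hx.1 hb₁0
        simp [hudef]; linarith
      have htp : t ^ c₂ ≤ 1 := Real.rpow_le_one ht0.le ht1 hc₂0
      have htppos : 0 < t ^ c₂ := Real.rpow_pos_of_pos ht0 c₂
      have huppos : 0 < u ^ c₁ := Real.rpow_pos_of_pos hupos c₁
      have hlogu : |Real.log u| ≤ |Real.log u₀| := by
        have h1 : Real.log u ≤ 0 := Real.log_nonpos hupos.le hu1
        have h2 : Real.log u₀ ≤ Real.log u := Real.log_le_log hu₀ hu0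
        rw [abs_of_nonpos h1, abs_of_nonpos (h2.trans h1)]
        linarith
      have hfeq : f x = C₂ * t ^ c₂ *
          ((Real.log C₂ - Real.log C₁ - c₁ * Real.log u) + c₂ * Real.log t) := by
        simp only [hfdef, ← htdef, ← hudef]
        rw [Real.log_div (by positivity) (by positivity),
          Real.log_mul hC₂.ne' htppos.ne', Real.log_mul hC₁.ne' huppos.ne',
          Real.log_rpow ht0, Real.log_rpow hupos]
        ring
      set A : ℝ := Real.log C₂ - Real.log C₁ - c₁ * Real.log u with hAdef
      have hAbound : |A| ≤ R := by
        have h1 : |A| ≤ |Real.log C₂| + |Real.log C₁| + c₁ * |Real.log u| := by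
          calc |A| ≤ |Real.log C₂ - Real.log C₁| + |c₁ * Real.log u| := by
                rw [hAdef, sub_eq_add_neg (Real.log C₂ - Real.log C₁)]
                exact (abs_add_le _ _).trans (by rw [abs_neg])
            _ ≤ (|Real.log C₂| + |Real.log C₁|) + c₁ * |Real.log u| := by
                gcongr
                · rw [sub_eq_add_neg]
                  exact (abs_add_le _ _).trans (by rw [abs_neg])
                · rw [abs_mul, abs_of_nonneg hc₁0]
        have h2 : c₁ * |Real.log u| ≤ c₁ * |Real.log u₀| := by
          exact mul_le_mul_of_nonneg_left hlogu hc₁0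
        rw [hRdef]; linarith
      have habs : |A + c₂ * Real.log t| ≤ R + c₂ * |Real.log t| := by
        calc |A + c₂ * Real.log t| ≤ |A| + |c₂ * Real.log t| := abs_add_le _ _
          _ ≤ R + c₂ * |Real.log t| := by
              rw [abs_mul, abs_of_nonneg hc₂0]; gcongr
      have hnorm : ‖f x‖ = C₂ * t ^ c₂ * |A + c₂ * Real.log t| := by
        rw [hfeq, Real.norm_eq_abs, abs_mul, abs_of_pos (by positivity)]
      have hlogtnn : 0 ≤ |Real.log t| := abs_nonneg _
      have step : ‖f x‖ ≤ C₂ * R + M * |Real.log t| := by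
        rw [hnorm]
        calc C₂ * t ^ c₂ * |A + c₂ * Real.log t|
            ≤ C₂ * t ^ c₂ * (R + c₂ * |Real.log t|) := by gcongr
          _ ≤ C₂ * 1 * (R + c₂ * |Real.log t|) := by gcongr
          _ = C₂ * R + M * |Real.log t| := by rw [hMdef]; ring
      have hKR : C₂ * R ≤ K := le_max_left _ _
      calc ‖f x‖ ≤ C₂ * R + M * |Real.log t| := step
        _ ≤ K + M * |Real.log t| := by linarith
        _ = G x := by simp only [hGdef, ← htdef]
end

section
/- Suppose a₁ ≥ 1, γ > 0, c > 0 satisfy 1/γ ≥ a₁ and 2^{a₁} c^{1/γ} ≥ 2 + 1/a₁, and let 0 < b_k < b₁ ≤ 1 with Δ_k = b₁ - b_k > 0. If T ≥ (2c/Δ_k)^{1/γ}, then Δ_k - b₁ (T + 1/a₁)^{-1/a₁} ≥ 0. -/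
/-- Key comparison step: under the parameter conditions `1/γ ≥ a₁` and
`2^{a₁} c^{1/γ} ≥ 2 + 1/a₁`, if `T ≥ (2c/Δ_k)^{1/γ}` with `Δ_k = b₁ - b_k > 0`,
then `Δ_k - b₁ (T + 1/a₁)^{-1/a₁} ≥ 0`. -/
theorem stmt11 (a₁ γ c b₁ bk T : ℝ) (ha : 1 ≤ a₁) (hγ : 0 < γ) (hc : 0 < c)
    (hγa : a₁ ≤ 1 / γ) (hpar : 2 + 1 / a₁ ≤ 2 ^ a₁ * c ^ (1 / γ))
    (hbk : 0 < bk) (hbb : bk < b₁) (hb₁ : b₁ ≤ 1)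
    (hT : (2 * c / (b₁ - bk)) ^ (1 / γ) ≤ T) :
    0 ≤ (b₁ - bk) - b₁ * (T + 1 / a₁) ^ (-(1 / a₁)) := by
  set Δ := b₁ - bk with hΔdef
  have hΔ : 0 < Δ := by simp only [hΔdef]; linarith
  have hΔ1 : Δ ≤ 1 := by simp only [hΔdef]; linarith
  have ha0 : 0 < a₁ := by linarith
  have h1 : Δ ^ (1 / γ) ≤ Δ ^ a₁ :=
    Real.rpow_le_rpow_of_exponent_ge hΔ hΔ1 hγa
  have h2 : (2:ℝ) ^ a₁ ≤ (2:ℝ) ^ (1 / γ) :=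
    Real.rpow_le_rpow_of_exponent_le one_le_two hγa
  have hΔa : 0 < Δ ^ a₁ := Real.rpow_pos_of_pos hΔ a₁
  have hΔg : 0 < Δ ^ (1 / γ) := Real.rpow_pos_of_pos hΔ (1 / γ)
  have hcg : 0 < c ^ (1 / γ) := Real.rpow_pos_of_pos hc (1 / γ)
  have hT' : (2 * c) ^ (1 / γ) / Δ ^ (1 / γ) ≤ T := by
    rwa [← Real.div_rpow (by linarith) hΔ.le]
  have hmul : ((2:ℝ) * c) ^ (1 / γ) = 2 ^ (1 / γ) * c ^ (1 / γ) :=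
    Real.mul_rpow (by norm_num) hc.le
  have hkey : Δ ^ (-a₁) ≤ T + 1 / a₁ := by
    have h3 : (2 + 1 / a₁) / Δ ^ a₁ ≤ (2 * c) ^ (1 / γ) / Δ ^ (1 / γ) := by
      rw [hmul]
      apply div_le_div₀ (by positivity) _ hΔg h1
      calc 2 + 1 / a₁ ≤ 2 ^ a₁ * c ^ (1 / γ) := hpar
        _ ≤ 2 ^ (1 / γ) * c ^ (1 / γ) := by nlinarith
    have h4 : Δ ^ (-a₁) ≤ (2 + 1 / a₁) / Δ ^ a₁ := by
      rw [Real.rpow_neg hΔ.le, inv_eq_one_div]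
      gcongr
      have : 0 < 1 / a₁ := by positivity
      linarith
    have hpa : 0 < 1 / a₁ := by positivity
    linarith [h4.trans (h3.trans hT')]
  have h5 : (T + 1 / a₁) ^ (-(1 / a₁)) ≤ (Δ ^ (-a₁)) ^ (-(1 / a₁)) :=
    Real.rpow_le_rpow_of_nonpos (Real.rpow_pos_of_pos hΔ _) hkey
      (neg_nonpos.mpr (by positivity))
  have h6 : (Δ ^ (-a₁)) ^ (-(1 / a₁)) = Δ := by
    rw [← Real.rpow_mul hΔ.le]
    rw [show -a₁ * -(1 / a₁) = a₁ * (1 / a₁) by ring,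
      mul_one_div_cancel ha0.ne', Real.rpow_one]
  rw [h6] at h5
  have hr0 : 0 ≤ (T + 1 / a₁) ^ (-(1 / a₁)) :=
    (Real.rpow_pos_of_pos (lt_of_lt_of_le (Real.rpow_pos_of_pos hΔ _) hkey) _).le
  nlinarith
end
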